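/- For all k ∈ ℤ and nonzero l ∈ ℤ, the commutator identity [a_n(l), x_n⁺(k)] = ([2l]/l) · x_n⁺(k+l) holds in M_{2n}(R). -/
import Mathlib


noncomputable section

open LaurentPolynomial

/-- The base field `F = ℚ(q)`. -/
abbrev F : Type := RatFunc ℚ

/-- The Laurent polynomial ring `R = F[z, z⁻¹]`. -/
abbrev R : Type := LaurentPolynomial F

/-- The generator `q` of `ℚ(q)`. -/
def q : F := RatFunc.X

/-- The quantum integer `[m] = (q^m − q^{−m})/(q − q^{−1})`. -/
def qint (m : ℤ) : F := (q ^ m - q ^ (-m)) / (q - q⁻¹)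

/-- The matrix unit `E_{ab} ∈ M_N(R)` in the 1-based labels
`v_1,…,v_n,v_{n̄},…,v_{1̄}` (so `v_{ī} ↔ 2n+1−i`, e.g. `n̄ ↔ n+1`). -/
def E (N a b : ℕ) : Matrix (Fin N) (Fin N) R :=
  Matrix.of fun r s => if (r : ℕ) + 1 = a ∧ (s : ℕ) + 1 = b then (1 : R) else 0

/-- The element `(q^c z)^k ∈ R`. -/
def zq (c k : ℤ) : R := C (q ^ (c * k)) * T k

/-- Type `D_n⁽¹⁾`: `x_n⁺(k) = (q^{n−1}z)^k (E_{n−1,n̄} + E_{n,\overline{n−1}})`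
in `M_{2n}(R)` (labels: `n̄ ↔ n+1`, `\overline{n−1} ↔ n+2`). -/
def xpD (n : ℕ) (k : ℤ) : Matrix (Fin (2*n)) (Fin (2*n)) R :=
  zq ((n : ℤ) - 1) k • (E (2*n) (n-1) (n+1) + E (2*n) n (n+2))

/-- Type `D_n⁽¹⁾`: `a_n(l) = ([l]/l)(q^{n−1}z)^l (q^{−l}(E_{n−1,n−1} + E_{n,n})
− q^l(E_{n̄,n̄} + E_{\overline{n−1},\overline{n−1}}))` in `M_{2n}(R)`. -/
def aD (n : ℕ) (l : ℤ) : Matrix (Fin (2*n)) (Fin (2*n)) R :=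
  (C (qint l / (l : F)) * zq ((n : ℤ) - 1) l) •
    (C (q ^ (-l)) • (E (2*n) (n-1) (n-1) + E (2*n) n n) -
     C (q ^ l) • (E (2*n) (n+1) (n+1) + E (2*n) (n+2) (n+2)))

lemma q_ne_zero : q ≠ 0 := RatFunc.X_ne_zero

lemma E_mul (N a b c d : ℕ) (hb : 1 ≤ b) (hbN : b ≤ N) :
    E N a b * E N c d = if b = c then E N a d else 0 := by
  ext r s
  rw [Matrix.mul_apply, Finset.sum_eq_single (⟨b - 1, by omega⟩ : Fin N)]
  · simp only [E, Matrix.of_apply]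
    have hb1 : b - 1 + 1 = b := by omega
    split_ifs <;> simp_all
  · intro t _ ht
    have : (t : ℕ) + 1 ≠ b := by
      intro h; apply ht; apply Fin.ext; simp; omega
    simp [E, this]
  · intro h; exact absurd (Finset.mem_univ _) h

lemma zq_mul (c k l : ℤ) : zq c k * zq c l = zq c (k + l) := by
  simp only [zq]
  rw [show C (q ^ (c*k)) * T k * (C (q ^ (c*l)) * T l)
      = (C (q ^ (c*k)) * C (q ^ (c*l))) * (T k * T l) by ring,
    ← map_mul C, ← zpow_add₀ q_ne_zero, ← T_add, ← mul_add]

lemma qint_double (l : ℤ) : qint l * (q ^ (-l) + q ^ l) = qint (2 * l) := by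
  unfold qint
  rw [div_mul_eq_mul_div]
  congr 1
  rw [two_mul, zpow_add₀ q_ne_zero, neg_add, zpow_add₀ q_ne_zero]
  ring

/-- `[a_n(l), x_n⁺(k)] = ([2l]/l) x_n⁺(k+l)` in `M_{2n}(R)`. -/
theorem aD_xpD_comm (n : ℕ) (hn : 2 ≤ n) (k l : ℤ) (hl : l ≠ 0) :
    aD n l * xpD n k - xpD n k * aD n l =
      C (qint (2 * l) / (l : F)) • xpD n (k + l) := by
  set N := 2 * n with hN
  have h1 : (1:ℕ) ≤ n - 1 := by omega
  have h2 : n - 1 ≤ N := by omega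
  have h3 : n ≤ N := by omega
  have h4 : n + 1 ≤ N := by omega
  have h5 : n + 2 ≤ N := by omega
  set P := E N (n-1) (n-1) + E N n n with hP
  set Q := E N (n+1) (n+1) + E N (n+2) (n+2) with hQ
  set X := E N (n-1) (n+1) + E N n (n+2) with hX
  have hPX : P * X = X := by
    rw [hP, hX, add_mul, mul_add, mul_add,
      E_mul N (n-1) (n-1) (n-1) (n+1) h1 h2, E_mul N (n-1) (n-1) n (n+2) h1 h2,
      E_mul N n n (n-1) (n+1) (by omega) h3, E_mul N n n n (n+2) (by omega) h3,
      if_pos rfl, if_neg (by omega), if_neg (by omega), if_pos rfl]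
    simp
  have hQX : Q * X = 0 := by
    rw [hQ, hX, add_mul, mul_add, mul_add,
      E_mul N (n+1) (n+1) (n-1) (n+1) (by omega) h4, E_mul N (n+1) (n+1) n (n+2) (by omega) h4,
      E_mul N (n+2) (n+2) (n-1) (n+1) (by omega) h5, E_mul N (n+2) (n+2) n (n+2) (by omega) h5,
      if_neg (by omega), if_neg (by omega), if_neg (by omega), if_neg (by omega)]
    simp
  have hXP : X * P = 0 := by
    rw [hP, hX, add_mul, mul_add, mul_add,
      E_mul N (n-1) (n+1) (n-1) (n-1) (by omega) h4, E_mul N (n-1) (n+1) n n (by omega) h4,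
      E_mul N n (n+2) (n-1) (n-1) (by omega) h5, E_mul N n (n+2) n n (by omega) h5,
      if_neg (by omega), if_neg (by omega), if_neg (by omega), if_neg (by omega)]
    simp
  have hXQ : X * Q = X := by
    rw [hQ, hX, add_mul, mul_add, mul_add,
      E_mul N (n-1) (n+1) (n+1) (n+1) (by omega) h4, E_mul N (n-1) (n+1) (n+2) (n+2) (by omega) h4,
      E_mul N n (n+2) (n+1) (n+1) (by omega) h5, E_mul N n (n+2) (n+2) (n+2) (by omega) h5,
      if_pos rfl, if_neg (by omega), if_neg (by omega), if_pos rfl]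
    simp
  have goal1 : aD n l = (C (qint l / (l : F)) * zq ((n : ℤ) - 1) l) •
      (C (q ^ (-l)) • P - C (q ^ l) • Q) := rfl
  have goal2 : ∀ m, xpD n m = zq ((n : ℤ) - 1) m • X := fun m => rfl
  rw [goal1, goal2, goal2]
  simp only [smul_mul_assoc, mul_smul_comm, sub_mul, mul_sub, smul_sub, hPX, hQX, hXP, hXQ,
    smul_zero, sub_zero, zero_sub, smul_neg, sub_neg_eq_add, smul_smul]
  rw [← add_smul]
  congr 1
  rw [show zq ((n:ℤ)-1) k * (C (qint l / (l:F)) * zq ((n:ℤ)-1) l * C (q ^ (-l))) +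
        C (qint l / (l:F)) * zq ((n:ℤ)-1) l * C (q ^ l) * zq ((n:ℤ)-1) k
      = (C (qint l / (l:F)) * C (q ^ (-l)) + C (qint l / (l:F)) * C (q ^ l)) *
        (zq ((n:ℤ)-1) l * zq ((n:ℤ)-1) k) by ring,
    zq_mul, add_comm l k, ← map_mul C, ← map_mul C, ← map_add C, ← mul_add,
    div_mul_eq_mul_div, qint_double]
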